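/- arXiv:1608.05887 — 12 statements merged into one kernel-verified Lean document; each statement's English description precedes it below -/
import Mathlib

section
/- For all integers l ≥ 1 and 0 ≤ k ≤ l+1, the identity (1/(l+2))·C(l,k)·C(l+k+2,k+1) + (1/(l+2))·C(l,k-1)·C(l+k+1,k) = (1/(l+1))·C(l+1,k)·C(l+k+1,k+1) holds, where C(n,k) denotes the binomial coefficient (with C(l,-1)=0 and C(l,l+1)=0 as appropriate). -/
/-!
Both `C(l+k+2, k+1)` and `C(l+k+1, k+1)` are rational multiples of `C(l+k+1, k)`, namely
`(l+k+2)/(k+1)` and `(l+1)/(k+1)` times it. Cancelling this common factor, the identity for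
`k = m + 1` becomes `C(l,m+1)(l+m+3) + C(l,m)(m+2) = (l+2) C(l+1,m+1)`, which is Pascal's rule
combined with `(l+1) C(l,m) = (m+1) C(l+1,m+1)`.
-/

namespace Nat

variable {K : Type*} [Field K] [CharZero K]

theorem cast_add_one_choose_add_one (n k : ℕ) :
    ((n + 1).choose (k + 1) : K) = (n + 1) / (k + 1) * n.choose k := by
  rw [div_mul_eq_mul_div, eq_div_iff (cast_add_one_ne_zero k)]
  exact_mod_cast (add_one_mul_choose_eq n k).symm

theorem cast_choose_add_one (n k : ℕ) :
    (n.choose (k + 1) : K) = (n - k) / (k + 1) * n.choose k := by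
  rw [div_mul_eq_mul_div, eq_div_iff (cast_add_one_ne_zero k), mul_comm _ (n.choose k : K)]
  rcases le_or_gt k n with hkn | hnk
  · rw [← cast_sub hkn]
    exact_mod_cast choose_succ_right_eq n k
  · simp [choose_eq_zero_of_lt hnk, choose_eq_zero_of_lt (hnk.trans (lt_add_one k))]

theorem choose_add_one_mul_add_choose_mul (l m : ℕ) :
    l.choose (m + 1) * (l + m + 3) + l.choose m * (m + 2) = (l + 2) * (l + 1).choose (m + 1) := by
  have h := add_one_mul_choose_eq l m
  rw [choose_succ_succ'] at h ⊢
  linear_combination h.symm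

end Nat

theorem coeff_identity_A_general (l k : ℕ) :
    (1 / ((l : ℚ) + 2)) * (l.choose k) * ((l + k + 2).choose (k + 1))
      + (1 / ((l : ℚ) + 2)) *
        (if k = 0 then 0 else (l.choose (k - 1)) * ((l + k + 1).choose k))
      = (1 / ((l : ℚ) + 1)) * ((l + 1).choose k) * ((l + k + 1).choose (k + 1)) := by
  rw [Nat.cast_add_one_choose_add_one, Nat.cast_choose_add_one]
  push_cast
  cases k with
  | zero =>
    simp only [Nat.choose_zero_right, ↓reduceIte]
    field_simp
    ring
  | succ m =>
    rw [if_neg m.succ_ne_zero, Nat.add_sub_cancel]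
    have key := congrArg (Nat.cast : ℕ → ℚ) (Nat.choose_add_one_mul_add_choose_mul l m)
    push_cast at key ⊢
    field_simp
    linear_combination ((l + (m + 1) + 1).choose (m + 1) * ((l : ℚ) + 1)) * key

theorem coeff_identity_A (l k : ℕ) (hl : 1 ≤ l) (hk : k ≤ l + 1) :
    (1 / ((l : ℚ) + 2)) * (l.choose k) * ((l + k + 2).choose (k + 1))
      + (1 / ((l : ℚ) + 2)) *
        (if k = 0 then 0 else (l.choose (k - 1)) * ((l + k + 1).choose k))
      = (1 / ((l : ℚ) + 1)) * ((l + 1).choose k) * ((l + k + 1).choose (k + 1)) :=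
  coeff_identity_A_general l k
end

section
/- Define f_{B_l}(t) = Σ_{k=0}^{l} (-1)^k C(l,k)·C(l+k,k)·t^k and f⁺_{B_l}(t) = Σ_{k=0}^{l} (-1)^k C(l,k)·C(l+k-1,k)·t^k as polynomials over ℤ. Then for all l ≥ 2, f_{B_l}(t) + f_{B_{l-1}}(t) = 2·f⁺_{B_l}(t). -/
open Polynomial Finset

noncomputable def fBZ (l : ℕ) : Polynomial ℤ :=
  ∑ k ∈ Finset.range (l + 1),
    Polynomial.C ((-1 : ℤ) ^ k * (l.choose k) * ((l + k).choose k)) * Polynomial.X ^ k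

noncomputable def fBplusZ (l : ℕ) : Polynomial ℤ :=
  ∑ k ∈ Finset.range (l + 1),
    Polynomial.C ((-1 : ℤ) ^ k * (l.choose k) * ((l + k - 1).choose k)) * Polynomial.X ^ k

/-!
Comparing coefficients of `t^k`, the identity reduces after Pascal's rule on `C(l+k, k)` and
`C(l, k)` to `C(l, k) C(l+k-1, k-1) = C(l-1, k-1) C(l+k-1, k)`. Both sides count the same
trinomial coefficient `(l+k-1)! / (k! (k-1)! (l-k)!)`; multiplying by `k` makes this visible through
`k C(l, k) = l C(l-1, k-1)` and `k C(l+k-1, k) = l C(l+k-1, k-1)`.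
-/

theorem Nat.choose_succ_mul_choose_add (m j : ℕ) :
    (m + 1).choose (j + 1) * (m + j + 1).choose j
      = m.choose j * (m + j + 1).choose (j + 1) := by
  have hm := Nat.add_one_mul_choose_eq m j
  have hmj := Nat.choose_succ_right_eq (m + j + 1) j
  rw [show m + j + 1 - j = m + 1 by omega] at hmj
  refine Nat.eq_of_mul_eq_mul_right j.succ_pos ?_
  calc (m + 1).choose (j + 1) * (m + j + 1).choose j * (j + 1)
      = m.choose j * ((m + j + 1).choose j * (m + 1)) := by rw [mul_right_comm, ← hm]; ring
    _ = m.choose j * (m + j + 1).choose (j + 1) * (j + 1) := by rw [← hmj]; ring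

theorem Nat.choose_succ_mul_add_choose_mul_add_eq (m k : ℕ) :
    (m + 1).choose k * (m + 1 + k).choose k + m.choose k * (m + k).choose k
      = 2 * ((m + 1).choose k * (m + k).choose k) := by
  cases k with
  | zero => simp
  | succ j =>
    have pascal_top : (m + 1 + (j + 1)).choose (j + 1)
        = (m + j + 1).choose j + (m + j + 1).choose (j + 1) := by
      rw [show m + 1 + (j + 1) = m + j + 1 + 1 by omega, Nat.choose_succ_succ']
    have pascal_left := Nat.choose_succ_succ' m j
    have key := Nat.choose_succ_mul_choose_add m j
    rw [pascal_top, show m + (j + 1) = m + j + 1 by omega]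
    zify at pascal_left key ⊢
    linear_combination key - ((m + j + 1).choose (j + 1) : ℤ) * pascal_left

theorem fBZ_eq_sum_range_succ_succ (m : ℕ) :
    fBZ m = ∑ k ∈ range (m + 2),
      C ((-1 : ℤ) ^ k * (m.choose k) * ((m + k).choose k)) * X ^ k := by
  rw [fBZ, sum_range_succ _ (m + 1), Nat.choose_succ_self]
  simp

theorem fBZ_succ_add_fBZ (m : ℕ) : fBZ (m + 1) + fBZ m = 2 * fBplusZ (m + 1) := by
  rw [fBZ_eq_sum_range_succ_succ m, fBZ, fBplusZ, mul_sum, ← sum_add_distrib]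
  refine sum_congr rfl fun k _ => ?_
  have hcoeff : ((m + 1).choose k * (m + 1 + k).choose k + m.choose k * (m + k).choose k : ℤ)
      = 2 * ((m + 1).choose k * (m + k).choose k) := by
    exact_mod_cast Nat.choose_succ_mul_add_choose_mul_add_eq m k
  rw [show m + 1 + k - 1 = m + k by omega, ← add_mul, ← C_add, ← mul_assoc, ← C_ofNat,
    ← C_mul]
  congr 2
  linear_combination (-1 : ℤ) ^ k * hcoeff

theorem fB_add_fB_eq_two_fBplus_general (l : ℕ) :
    fBZ l + fBZ (l - 1) = 2 * fBplusZ l := by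
  cases l with
  | zero => norm_num [fBZ, fBplusZ]
  | succ m => exact fBZ_succ_add_fBZ m

theorem fB_add_fB_eq_two_fBplus (l : ℕ) (hl : 2 ≤ l) :
    fBZ l + fBZ (l - 1) = 2 * fBplusZ l :=
  fB_add_fB_eq_two_fBplus_general l
end

section
/- Define f_{B_l}(t) = Σ_{k=0}^{l} (-1)^k C(l,k)·C(l+k,k)·t^k and f_{D_l}(t) = Σ_{k=0}^{l} (-1)^k (C(l,k)·C(l+k-1,k) + C(l-2,k-2)·C(l+k-2,k))·t^k as polynomials over ℚ. Then for all l ≥ 4, f_{D_l}(t) = ((l-2)/(2(l-1)))·f_{B_l}(t) + (l/(2(l-1)))·(1-2t)·f_{B_{l-1}}(t). -/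
open Polynomial Finset

noncomputable def fB (l : ℕ) : Polynomial ℚ :=
  ∑ k ∈ Finset.range (l + 1),
    Polynomial.C ((-1 : ℚ) ^ k * (l.choose k) * ((l + k).choose k)) * Polynomial.X ^ k
noncomputable def fD (l : ℕ) : Polynomial ℚ :=
  ∑ k ∈ Finset.range (l + 1),
    Polynomial.C ((-1 : ℚ) ^ k *
      ((l.choose k * (l + k - 1).choose k
        + if 2 ≤ k then (l - 2).choose (k - 2) * (l + k - 2).choose k else 0 : ℕ) : ℚ)) *
      Polynomial.X ^ k

/-
Compare coefficients of `t ^ k` with `l = n + 2`. By the contiguity relations of binomial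
coefficients, each of the five products of binomials that occur, multiplied by
`(l + k) * (l + k - 1)`, is a polynomial multiple (in `l` and `k`) of the unsigned coefficient
`C(l, k) * C(l + k, k)` of `f_{B_l}`, so the identity reduces to a polynomial identity in `l`, `k`.
-/

def bCoeff (l k : ℕ) : ℕ := l.choose k * (l + k).choose k

lemma coeff_sum_range_C_mul_X_pow {R : Type*} [Semiring R] (a : ℕ → R) (m i : ℕ) :
    (∑ k ∈ range m, C (a k) * X ^ k).coeff i = if i < m then a i else 0 := by
  simp only [finsetSum_coeff, coeff_C_mul_X_pow, Finset.sum_ite_eq, Finset.mem_range]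

lemma fB_coeff (l k : ℕ) : (fB l).coeff k = (-1 : ℚ) ^ k * bCoeff l k := by
  rw [fB, coeff_sum_range_C_mul_X_pow, bCoeff, Nat.cast_mul, mul_assoc]
  split_ifs with hk
  · rfl
  · simp [Nat.choose_eq_zero_of_lt (by omega : l < k)]

lemma fD_coeff (l k : ℕ) :
    (fD l).coeff k = (-1 : ℚ) ^ k *
      ((l.choose k * (l + k - 1).choose k
        + if 2 ≤ k then (l - 2).choose (k - 2) * (l + k - 2).choose k else 0 : ℕ) : ℚ) := by
  rw [fD, coeff_sum_range_C_mul_X_pow]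
  split_ifs with hk
  · rfl
  · rfl
  · have : (l - 2).choose (k - 2) * (l + k - 2).choose k = 0 := by
      rcases le_or_gt 2 l with hl | hl
      · rw [Nat.choose_eq_zero_of_lt (by omega : l - 2 < k - 2), zero_mul]
      · rw [Nat.choose_eq_zero_of_lt (by omega : l + k - 2 < k), mul_zero]
    simp [Nat.choose_eq_zero_of_lt (by omega : l < k), this]
  · simp [Nat.choose_eq_zero_of_lt (by omega : l < k)]

lemma add_succ_mul_choose_add (n k : ℕ) :
    (n + k + 1) * (n + k).choose k = (n + 1) * (n + k + 1).choose k := by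
  have h := Nat.choose_mul_succ_eq (n + k) k
  rw [show n + k + 1 - k = n + 1 by omega] at h
  linarith

lemma choose_mul_succ_add_choose_succ_mul (n k : ℕ) :
    n.choose k * (n + 1) + (n + 1).choose k * k = (n + 1).choose k * (n + 1) := by
  rcases le_or_gt k (n + 1) with hk | hk
  · rw [Nat.choose_mul_succ_eq, ← mul_add, Nat.sub_add_cancel hk]
  · simp [Nat.choose_eq_zero_of_lt hk, Nat.choose_eq_zero_of_lt (by omega : n < k)]

lemma bCoeff_succ_left (n k : ℕ) :
    (n + k + 1) * bCoeff n k + k * bCoeff (n + 1) k = (n + 1) * bCoeff (n + 1) k := by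
  have e1 := add_succ_mul_choose_add n k
  have e2 := choose_mul_succ_add_choose_succ_mul n k
  simp only [bCoeff, show n + 1 + k = n + k + 1 by omega]
  zify at e1 e2 ⊢
  linear_combination (n.choose k : ℤ) * e1 + ((n + k + 1).choose k : ℤ) * e2

lemma bCoeff_succ_succ (n k : ℕ) :
    (n + k + 2) * (n + k + 1) * bCoeff n k = (k + 1) ^ 2 * bCoeff (n + 1) (k + 1) := by
  have e1 := Nat.add_one_mul_choose_eq n k
  have e2 := Nat.add_one_mul_choose_eq (n + k + 1) k
  have e3 := add_succ_mul_choose_add n k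
  simp only [bCoeff, show n + 1 + (k + 1) = n + k + 1 + 1 by omega]
  zify at e1 e2 e3 ⊢
  linear_combination (n + k + 2 : ℤ) * (n.choose k : ℤ) * e3
    + (n + k + 2 : ℤ) * ((n + k + 1).choose k : ℤ) * e1
    + ((n + 1).choose (k + 1) : ℤ) * (k + 1 : ℤ) * e2

lemma add_succ_mul_choose_mul_choose (n k : ℕ) :
    (n + k + 1) * ((n + 1).choose k * (n + k).choose k) = (n + 1) * bCoeff (n + 1) k := by
  rw [bCoeff, show n + 1 + k = n + k + 1 by omega, mul_left_comm, add_succ_mul_choose_add]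
  ring

lemma choose_mul_choose_add_two (n k : ℕ) :
    (n + k + 4) * (n + k + 3) * (n.choose k * (n + k + 2).choose (k + 2))
      = (k + 2) * (k + 1) * bCoeff (n + 2) (k + 2) := by
  have e1 := Nat.add_one_mul_choose_eq n k
  have e2 := Nat.add_one_mul_choose_eq (n + 1) (k + 1)
  have e3 : (n + k + 3) * (n + k + 2).choose (k + 2) = (n + 1) * (n + k + 3).choose (k + 2) :=
    add_succ_mul_choose_add n (k + 2)
  have e4 : (n + k + 4) * (n + k + 3).choose (k + 2) = (n + 2) * (n + k + 4).choose (k + 2) := by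
    simpa only [show n + 1 + (k + 2) = n + k + 3 by ring] using
      add_succ_mul_choose_add (n + 1) (k + 2)
  simp only [bCoeff, show n + 2 + (k + 2) = n + k + 4 by ring]
  zify at e1 e2 e3 e4 ⊢
  linear_combination (n + k + 4 : ℤ) * (n.choose k : ℤ) * e3
    + (n + 1 : ℤ) * (n.choose k : ℤ) * e4
    + (n + 2 : ℤ) * ((n + k + 4).choose (k + 2) : ℤ) * e1
    + (k + 1 : ℤ) * ((n + k + 4).choose (k + 2) : ℤ) * e2

lemma fD_add_two_coeff_identity (n j : ℕ) :
    2 * (n + 1) * ((n + 2).choose (j + 2) * (n + j + 3).choose (j + 2)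
        + n.choose j * (n + j + 2).choose (j + 2))
      = n * bCoeff (n + 2) (j + 2) + (n + 2) * bCoeff (n + 1) (j + 2)
        + 2 * (n + 2) * bCoeff (n + 1) (j + 1) := by
  apply Nat.eq_of_mul_eq_mul_left (by positivity : 0 < (n + j + 4) * (n + j + 3))
  have hj : n + 1 + (j + 2) = n + j + 3 := by ring
  have a : (n + j + 4) * ((n + 2).choose (j + 2) * (n + j + 3).choose (j + 2))
      = (n + 2) * bCoeff (n + 2) (j + 2) := by
    simpa only [hj] using add_succ_mul_choose_mul_choose (n + 1) (j + 2)
  have b : (n + j + 4) * bCoeff (n + 1) (j + 2) + (j + 2) * bCoeff (n + 2) (j + 2)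
      = (n + 2) * bCoeff (n + 2) (j + 2) := by
    simpa only [hj] using bCoeff_succ_left (n + 1) (j + 2)
  have c : (n + j + 4) * (n + j + 3) * bCoeff (n + 1) (j + 1)
      = (j + 2) ^ 2 * bCoeff (n + 2) (j + 2) := by
    simpa only [show n + 1 + (j + 1) = n + j + 2 by ring] using bCoeff_succ_succ (n + 1) (j + 1)
  have d := choose_mul_choose_add_two n j
  zify at a b c d ⊢
  linear_combination 2 * (n + 1 : ℤ) * (n + j + 3 : ℤ) * a + 2 * (n + 1 : ℤ) * d
    - (n + 2 : ℤ) * (n + j + 3 : ℤ) * b - 2 * (n + 2 : ℤ) * c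

theorem C_mul_fD_add_two (n : ℕ) :
    C (2 * ((n : ℚ) + 1)) * fD (n + 2)
      = C (n : ℚ) * fB (n + 2) + C ((n : ℚ) + 2) * (1 - 2 * X) * fB (n + 1) := by
  have hX : C ((n : ℚ) + 2) * (1 - 2 * X) * fB (n + 1)
      = C ((n : ℚ) + 2) * fB (n + 1) - C (2 * ((n : ℚ) + 2)) * (X * fB (n + 1)) := by
    rw [C_mul, C_ofNat]; ring
  ext k
  rw [hX, coeff_add, coeff_sub, coeff_C_mul, coeff_C_mul, coeff_C_mul, coeff_C_mul]
  rcases k with _ | _ | j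
  · simp only [fD_coeff, fB_coeff, bCoeff, mul_coeff_zero, coeff_X_zero,
      if_neg (by omega : ¬ 2 ≤ 0), Nat.choose_zero_right]
    push_cast
    ring
  · simp only [fD_coeff, fB_coeff, bCoeff, zero_add, coeff_X_mul, if_neg (by omega : ¬ 2 ≤ 1),
      Nat.choose_zero_right, Nat.choose_one_right, Nat.add_sub_cancel]
    push_cast
    ring
  · rw [coeff_X_mul, fB_coeff, fB_coeff, fB_coeff, fD_coeff, if_pos (by omega)]
    have h := congrArg (Nat.cast : ℕ → ℚ) (fD_add_two_coeff_identity n j)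
    simp only [show n + 2 + (j + 2) - 1 = n + j + 3 by omega, show n + 2 - 2 = n by omega,
      show j + 2 - 2 = j by omega, show n + 2 + (j + 2) - 2 = n + j + 2 by omega]
    push_cast at h ⊢
    linear_combination (-1 : ℚ) ^ j * h

theorem fD_eq_comb_fB (l : ℕ) (hl : 4 ≤ l) :
    fD l = Polynomial.C (((l : ℚ) - 2) / (2 * ((l : ℚ) - 1))) * fB l
      + Polynomial.C ((l : ℚ) / (2 * ((l : ℚ) - 1))) * (1 - 2 * Polynomial.X) * fB (l - 1) := by
  obtain ⟨n, rfl⟩ : ∃ n, l = n + 2 := ⟨l - 2, by omega⟩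
  have hn : 2 * ((n : ℚ) + 1) ≠ 0 := by positivity
  have e1 : ((n + 2 : ℕ) : ℚ) - 2 = n := by push_cast; ring
  have e2 : 2 * (((n + 2 : ℕ) : ℚ) - 1) = 2 * ((n : ℚ) + 1) := by push_cast; ring
  rw [e1, e2, show n + 2 - 1 = n + 1 by omega, Nat.cast_add, Nat.cast_ofNat]
  apply mul_left_cancel₀ (C_ne_zero.mpr hn)
  rw [C_mul_fD_add_two, mul_add, ← mul_assoc, ← C_mul, ← mul_assoc, ← mul_assoc, ← C_mul,
    mul_div_cancel₀ _ hn, mul_div_cancel₀ _ hn]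
end

section
/- For every l ≥ 1, the polynomial identity t(1-t)·f_{A_l}(t) = (1/(l+1)!)·dˡ/dtˡ[t^{l+1}(1-t)^{l+1}] holds, where f_{A_l}(t) = Σ_{k=0}^{l} (-1)^k (1/(l+2))·C(l,k)·C(l+k+2,k+1)·t^k. -/
open Polynomial Finset

noncomputable def fA (l : ℕ) : Polynomial ℚ :=
  ∑ k ∈ Finset.range (l + 1),
    Polynomial.C ((-1 : ℚ) ^ k * (1 / ((l : ℚ) + 2)) * (l.choose k) *
      ((l + k + 2).choose (k + 1))) * Polynomial.X ^ k

noncomputable def aaF (l : ℕ) : ℕ → ℚ := fun k =>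
  (-1 : ℚ) ^ k * (1 / ((l : ℚ) + 2)) * (l.choose k) * ((l + k + 2).choose (k + 1))

noncomputable def bbF (l : ℕ) : ℕ → ℚ := fun k =>
  (1 / ((l + 1).factorial : ℚ)) * ((-1 : ℚ) ^ k * ((l + 1).choose k) * (((l + 1 + k).descFactorial l : ℕ) : ℚ))

lemma keyAux (i m : ℕ) :
    (-1:ℚ)^(i+1) * (1/(((i+1+m:ℕ) : ℚ)+2)) * ((i+1+m).choose (i+1)) * (((i+1+m)+(i+1)+2).choose (i+2))
      - (-1:ℚ)^i * (1/(((i+1+m:ℕ):ℚ)+2)) * ((i+1+m).choose i) * (((i+1+m)+i+2).choose (i+1))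
    = (1 / ((((i+1+m) + 1).factorial : ℕ) : ℚ)) * ((-1:ℚ)^(i+1) * (((i+1+m) + 1).choose (i+1)) * ((((i+1+m)+1+(i+1)).descFactorial (i+1+m) : ℕ) : ℚ)) := by
  have hD : ((((2*i+m+3).descFactorial (i+1+m)) : ℕ) : ℚ) = ((2*i+m+3).factorial : ℚ) / ((i+2).factorial : ℚ) := by
    have h := Nat.factorial_mul_descFactorial (n := 2*i+m+3) (k := i+1+m) (by omega)
    rw [show 2*i+m+3-(i+1+m) = i+2 by omega] at h
    have h2 := congrArg (Nat.cast : ℕ → ℚ) h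
    push_cast at h2
    rw [eq_div_iff (by exact_mod_cast (Nat.factorial_ne_zero (i+2)))]
    linarith [h2]
  rw [show (i+1+m)+(i+1)+2 = 2*i+m+4 by omega, show (i+1+m)+i+2 = 2*i+m+3 by omega,
    show (i+1+m)+1+(i+1) = 2*i+m+3 by omega, show (i+1+m)+1 = i+m+2 by omega,
    Nat.cast_choose ℚ (show i+1 ≤ i+1+m by omega),
    Nat.cast_choose ℚ (show i+2 ≤ 2*i+m+4 by omega),
    Nat.cast_choose ℚ (show i ≤ i+1+m by omega),
    Nat.cast_choose ℚ (show i+1 ≤ 2*i+m+3 by omega),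
    Nat.cast_choose ℚ (show i+1 ≤ i+m+2 by omega), hD,
    show i+1+m-(i+1) = m by omega, show 2*i+m+4-(i+2) = i+m+2 by omega,
    show i+1+m-i = m+1 by omega, show 2*i+m+3-(i+1) = i+m+2 by omega,
    show i+m+2-(i+1) = m+1 by omega,
    show (2*i+m+4) = (2*i+m+3)+1 from rfl, Nat.factorial_succ (2*i+m+3),
    show (i+m+2) = (i+m+1)+1 from rfl, Nat.factorial_succ (i+m+1),
    show i+1+m = i+m+1 by omega,
    Nat.factorial_succ (i+1), Nat.factorial_succ i, Nat.factorial_succ m]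
  have n1 : ((i.factorial : ℕ) : ℚ) ≠ 0 := by exact_mod_cast Nat.factorial_ne_zero i
  have n2 : ((m.factorial : ℕ) : ℚ) ≠ 0 := by exact_mod_cast Nat.factorial_ne_zero m
  have n3 : (((i+m+1).factorial : ℕ) : ℚ) ≠ 0 := by exact_mod_cast Nat.factorial_ne_zero _
  have n4 : (((2*i+m+3).factorial : ℕ) : ℚ) ≠ 0 := by exact_mod_cast Nat.factorial_ne_zero _
  have n5 : ((i:ℚ)+1+m+2) ≠ 0 := by positivity
  push_cast
  field_simp
  ring

lemma keyEnd (l : ℕ) : aaF l (l+1) - aaF l l = bbF l (l+1) := by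
  have h0 : aaF l (l+1) = 0 := by
    simp [aaF, Nat.choose_eq_zero_of_lt (show l < l+1 by omega)]
  rw [h0, zero_sub]
  unfold aaF bbF
  have hD : ((((2*l+2).descFactorial l) : ℕ) : ℚ) = ((2*l+2).factorial : ℚ) / ((l+2).factorial : ℚ) := by
    have h := Nat.factorial_mul_descFactorial (n := 2*l+2) (k := l) (by omega)
    rw [show 2*l+2-l = l+2 by omega] at h
    have h2 := congrArg (Nat.cast : ℕ → ℚ) h
    push_cast at h2
    rw [eq_div_iff (by exact_mod_cast (Nat.factorial_ne_zero (l+2)))]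
    linarith [h2]
  rw [show l+l+2 = 2*l+2 by omega, show l+1+(l+1) = 2*l+2 by omega,
    Nat.choose_self l, Nat.choose_self (l+1),
    Nat.cast_choose ℚ (show l+1 ≤ 2*l+2 by omega),
    show 2*l+2-(l+1) = l+1 by omega, hD,
    show (l+2) = (l+1)+1 from rfl, Nat.factorial_succ (l+1)]
  have n3 : (((l+1).factorial : ℕ) : ℚ) ≠ 0 := by exact_mod_cast Nat.factorial_ne_zero _
  have n5 : ((l:ℚ)+2) ≠ 0 := by positivity
  push_cast
  field_simp
  ring

lemma keyStep (l i : ℕ) (h : i ≤ l) : aaF l (i+1) - aaF l i = bbF l (i+1) := by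
  rcases eq_or_lt_of_le h with rfl | hlt
  · exact keyEnd i
  · obtain ⟨m, rfl⟩ : ∃ m, l = i+1+m := ⟨l - (i+1), by omega⟩
    exact keyAux i m

lemma keyZero (l : ℕ) : aaF l 0 = bbF l 0 := by
  unfold aaF bbF
  have hD : ((((l+1).descFactorial l) : ℕ) : ℚ) = ((l+1).factorial : ℚ) := by
    have h := Nat.factorial_mul_descFactorial (n := l+1) (k := l) (by omega)
    rw [show l+1-l = 1 by omega] at h
    simpa using congrArg (Nat.cast : ℕ → ℚ) h
  have n3 : (((l+1).factorial : ℕ) : ℚ) ≠ 0 := by exact_mod_cast Nat.factorial_ne_zero _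
  have n5 : ((l:ℚ)+2) ≠ 0 := by positivity
  rw [show l+0+2 = l+2 from rfl, show l+1+0 = l+1 from rfl, hD,
    Nat.choose_zero_right, Nat.choose_zero_right, Nat.choose_one_right]
  push_cast
  field_simp

theorem rodrigues_A (l : ℕ) (hl : 1 ≤ l) :
    Polynomial.X * (1 - Polynomial.X) * fA l
      = Polynomial.C (1 / ((l + 1).factorial : ℚ)) *
        (Polynomial.derivative^[l] (Polynomial.X ^ (l + 1) * (1 - Polynomial.X) ^ (l + 1))) := by
  have hRHS : Polynomial.C (1 / ((l + 1).factorial : ℚ)) *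
      (Polynomial.derivative^[l] ((X:ℚ[X]) ^ (l + 1) * (1 - X) ^ (l + 1)))
      = ∑ k ∈ Finset.range (l+2), Polynomial.C (bbF l k) * X ^ (k+1) := by
    have h1 : ((1:ℚ[X]) - X)^(l+1)
        = ∑ k ∈ Finset.range (l+2), Polynomial.C ((-1:ℚ)^k * ((l+1).choose k)) * X ^ k := by
      rw [show (1:ℚ[X]) - X = -X + 1 by ring, add_pow]
      refine Finset.sum_congr rfl fun k _ => ?_
      rw [neg_pow, map_mul, map_pow, map_neg, map_one, ← C_eq_natCast]
      ring
    rw [h1, Finset.mul_sum, Polynomial.iterate_derivative_sum, Finset.mul_sum]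
    refine Finset.sum_congr rfl fun k _ => ?_
    rw [show (X:ℚ[X])^(l+1) * (C ((-1:ℚ)^k * ((l+1).choose k)) * X ^ k)
        = C ((-1:ℚ)^k * ((l+1).choose k)) * X ^ (l+1+k) by rw [pow_add]; ring,
      Polynomial.iterate_derivative_C_mul, Polynomial.iterate_derivative_X_pow_eq_C_mul,
      show l+1+k-l = k+1 by omega, map_mul]
    unfold bbF
    simp only [map_mul]
    ring
  rw [hRHS]
  have hfA : Polynomial.X * (1 - Polynomial.X) * fA l
      = (∑ k ∈ Finset.range (l+1), Polynomial.C (aaF l k) * X ^ (k+1))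
        - ∑ k ∈ Finset.range (l+1), Polynomial.C (aaF l k) * X ^ (k+2) := by
    rw [fA, Finset.mul_sum, ← Finset.sum_sub_distrib]
    refine Finset.sum_congr rfl fun k _ => ?_
    unfold aaF
    ring
  rw [hfA]
  rw [Finset.sum_range_succ' (fun k => Polynomial.C (bbF l k) * X ^ (k+1)) (l+1),
    Finset.sum_range_succ' (fun k => Polynomial.C (aaF l k) * X ^ (k+1)) l]
  have hext : ∑ i ∈ Finset.range l, Polynomial.C (aaF l (i+1)) * X ^ (i+1+1)
      = ∑ i ∈ Finset.range (l+1), Polynomial.C (aaF l (i+1)) * X ^ (i+1+1) := by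
    rw [Finset.sum_range_succ]
    have : aaF l (l+1) = 0 := by
      simp [aaF, Nat.choose_eq_zero_of_lt (show l < l+1 by omega)]
    rw [this]
    simp
  rw [hext, keyZero l]
  have hcomb : (∑ i ∈ Finset.range (l+1), Polynomial.C (aaF l (i+1)) * X ^ (i+1+1))
        - ∑ k ∈ Finset.range (l+1), Polynomial.C (aaF l k) * X ^ (k+2)
      = ∑ i ∈ Finset.range (l+1), Polynomial.C (bbF l (i+1)) * X ^ (i+1+1) := by
    rw [← Finset.sum_sub_distrib]
    refine Finset.sum_congr rfl fun i hi => ?_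
    rw [← keyStep l i (by simp at hi; omega), map_sub]
    ring
  rw [← hcomb]
  abel
end

section
/- For every l ≥ 4, the polynomial identity f_{D_l}(t) = (1/(l-1)!)·d^{l-1}/dt^{l-1}[t^{l-1}(1-t)^l] + (1/(l-2)!)·d^{l-2}/dt^{l-2}[t^l(1-t)^{l-2}] holds in ℚ[t], where f_{D_l}(t) = Σ_{k=0}^{l} (-1)^k (C(l,k)·C(l+k-1,k) + C(l-2,k-2)·C(l+k-2,k))·t^k. -/
open Polynomial Finset

lemma expand_pow (b : ℕ) : ((1 : Polynomial ℚ) - X) ^ b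
    = ∑ j ∈ Finset.range (b + 1), Polynomial.C ((-1 : ℚ) ^ j * b.choose j) * X ^ j := by
  have : ((1 : Polynomial ℚ) - X) = (-X) + 1 := by ring
  rw [this, add_pow]
  refine Finset.sum_congr rfl fun j hj => ?_
  rw [neg_pow, one_pow, mul_one]
  simp [C_eq_natCast]
  ring

lemma key (a b n : ℕ) : Polynomial.derivative^[n] ((X : Polynomial ℚ) ^ a * (1 - X) ^ b)
    = ∑ j ∈ Finset.range (b + 1),
        Polynomial.C ((-1 : ℚ) ^ j * b.choose j * (a + j).descFactorial n) * X ^ (a + j - n) := by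
  rw [expand_pow, Finset.mul_sum]
  have : ∀ j, (X : Polynomial ℚ) ^ a * (Polynomial.C ((-1 : ℚ) ^ j * b.choose j) * X ^ j)
      = Polynomial.C ((-1 : ℚ) ^ j * b.choose j) * X ^ (a + j) := by
    intro j; rw [pow_add]; ring
  simp only [this]
  rw [Polynomial.iterate_derivative_sum]
  refine Finset.sum_congr rfl fun j hj => ?_
  rw [Polynomial.iterate_derivative_C_mul, Polynomial.iterate_derivative_X_pow_eq_C_mul,
    ← mul_assoc, ← Polynomial.C_mul]

theorem rodrigues_D (l : ℕ) (hl : 4 ≤ l) :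
    fD l = Polynomial.C (1 / ((l - 1).factorial : ℚ)) *
        (Polynomial.derivative^[l - 1] (Polynomial.X ^ (l - 1) * (1 - Polynomial.X) ^ l))
      + Polynomial.C (1 / ((l - 2).factorial : ℚ)) *
        (Polynomial.derivative^[l - 2] (Polynomial.X ^ l * (1 - Polynomial.X) ^ (l - 2))) := by
  obtain ⟨m, rfl⟩ : ∃ m, l = m + 2 := ⟨l - 2, by omega⟩
  have h1 : m + 2 - 1 = m + 1 := rfl
  have h2 : m + 2 - 2 = m := rfl
  rw [h1, h2, key, key, Finset.mul_sum, Finset.mul_sum]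
  have S1 : ∑ j ∈ Finset.range (m + 2 + 1), Polynomial.C (1 / ((m+1).factorial : ℚ)) *
        (Polynomial.C ((-1 : ℚ) ^ j * (m+2).choose j * ((m+1) + j).descFactorial (m+1)) *
          X ^ ((m+1) + j - (m+1)))
      = ∑ k ∈ Finset.range (m + 2 + 1),
        Polynomial.C ((-1 : ℚ) ^ k * ((m+2).choose k * ((m+2) + k - 1).choose k : ℕ)) * X ^ k := by
    refine Finset.sum_congr rfl fun j _ => ?_
    have he : (m+1) + j - (m+1) = j := by omega
    have hc : (m+2) + j - 1 = (m+1) + j := by omega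
    rw [he, hc, ← mul_assoc, ← Polynomial.C_mul]
    congr 1
    have hd : ((m+1) + j).descFactorial (m+1) = (m+1).factorial * ((m+1)+j).choose (m+1) :=
      Nat.descFactorial_eq_factorial_mul_choose _ _
    have hs : ((m+1)+j).choose (m+1) = ((m+1)+j).choose j := Nat.choose_symm_add
    rw [hd, hs, Polynomial.C_inj]
    have hf : ((m+1).factorial : ℚ) ≠ 0 := Nat.cast_ne_zero.2 (Nat.factorial_ne_zero _)
    push_cast
    field_simp
  have S2 : ∑ j ∈ Finset.range (m + 1), Polynomial.C (1 / ((m).factorial : ℚ)) *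
        (Polynomial.C ((-1 : ℚ) ^ j * (m).choose j * ((m+2) + j).descFactorial m) *
          X ^ ((m+2) + j - m))
      = ∑ k ∈ Finset.range (m + 2 + 1),
        Polynomial.C ((-1 : ℚ) ^ k *
          ((if 2 ≤ k then (m).choose (k - 2) * ((m+2) + k - 2).choose k else 0 : ℕ) : ℚ)) * X ^ k := by
    conv_rhs => rw [Finset.sum_range_succ' _ (m + 2), Finset.sum_range_succ' _ (m + 1)]
    have z0 : Polynomial.C ((-1 : ℚ) ^ 0 *
        ((if 2 ≤ 0 then (m).choose (0 - 2) * ((m+2) + 0 - 2).choose 0 else 0 : ℕ) : ℚ)) * X ^ 0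
        = 0 := by norm_num
    have z1 : Polynomial.C ((-1 : ℚ) ^ 1 *
        ((if 2 ≤ 1 then (m).choose (1 - 2) * ((m+2) + 1 - 2).choose 1 else 0 : ℕ) : ℚ)) * X ^ 1
        = 0 := by norm_num
    rw [z0, z1, add_zero, add_zero]
    refine Finset.sum_congr rfl fun j _ => ?_
    have he : (m+2) + j - m = j + 2 := by omega
    have hit : Polynomial.C ((-1 : ℚ) ^ (j+1+1) *
        ((if 2 ≤ j+1+1 then (m).choose (j+1+1 - 2) * ((m+2) + (j+1+1) - 2).choose (j+1+1) else 0 : ℕ) : ℚ)) *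
          X ^ (j+1+1)
        = Polynomial.C ((-1 : ℚ) ^ (j+2) * ((m).choose j * ((m+2) + j).choose (j+2) : ℕ)) * X ^ (j+2) := by
      have : (m+2) + (j+1+1) - 2 = (m+2) + j := by omega
      have h4 : j + 1 + 1 - 2 = j := by omega
      rw [if_pos (by omega), this, h4]
    rw [he, hit, ← mul_assoc, ← Polynomial.C_mul]
    congr 1
    have hd : ((m+2) + j).descFactorial m = (m).factorial * ((m+2)+j).choose m :=
      Nat.descFactorial_eq_factorial_mul_choose _ _
    have hs : ((m+2)+j).choose m = ((m+2)+j).choose (j+2) := by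
      have h3 : m + 2 + j = m + (j + 2) := by omega
      rw [h3]
      exact Nat.choose_symm_add
    rw [hd, hs, Polynomial.C_inj]
    have hf : ((m).factorial : ℚ) ≠ 0 := Nat.cast_ne_zero.2 (Nat.factorial_ne_zero _)
    push_cast
    field_simp
    ring
  rw [S1, S2]
  unfold fD
  rw [← Finset.sum_add_distrib]
  refine Finset.sum_congr rfl fun k _ => ?_
  rw [← add_mul, ← Polynomial.C_add]
  congr 1
  push_cast
  ring
end

section
/- For every l ≥ 4, (1/(l-1)!)·d^{l-1}/dt^{l-1}[t^{l-1}(1-t)^l] + (1/(l-2)!)·d^{l-2}/dt^{l-2}[t^l(1-t)^{l-2}] = (1/(l-1)!)·d^{l-2}/dt^{l-2}[t^{l-2}(1-t)^{l-2}·((l-1) - (3l-2)t + (3l-2)t²)] as polynomials in ℚ[t]. -/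
open Polynomial

theorem rodrigues_D_two_forms (l : ℕ) (hl : 4 ≤ l) :
    Polynomial.C (1 / ((l - 1).factorial : ℚ)) *
        (Polynomial.derivative^[l - 1] (Polynomial.X ^ (l - 1) * (1 - Polynomial.X) ^ l))
      + Polynomial.C (1 / ((l - 2).factorial : ℚ)) *
        (Polynomial.derivative^[l - 2] (Polynomial.X ^ l * (1 - Polynomial.X) ^ (l - 2)))
      = Polynomial.C (1 / ((l - 1).factorial : ℚ)) *
        (Polynomial.derivative^[l - 2]
          (Polynomial.X ^ (l - 2) * (1 - Polynomial.X) ^ (l - 2) *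
            (Polynomial.C ((l : ℚ) - 1) - Polynomial.C (3 * (l : ℚ) - 2) * Polynomial.X
              + Polynomial.C (3 * (l : ℚ) - 2) * Polynomial.X ^ 2))) := by
  obtain ⟨m, rfl⟩ := Nat.exists_eq_add_of_le hl
  have h1 : 4 + m - 1 = (m + 2) + 1 := by omega
  have h2 : 4 + m - 2 = m + 2 := by omega
  rw [h1, h2]
  rw [Function.iterate_succ_apply]
  have hfac : (1 / (((m + 2) + 1).factorial : ℚ)) * ((m : ℚ) + 3) = 1 / ((m + 2).factorial : ℚ) := by
    have hne : ((m + 2).factorial : ℚ) ≠ 0 := Nat.cast_ne_zero.mpr (Nat.factorial_ne_zero _)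
    have hne2 : ((m : ℚ) + 3) ≠ 0 := by positivity
    have hfe : (((m + 2) + 1).factorial : ℚ) = ((m : ℚ) + 3) * ((m + 2).factorial : ℚ) := by
      rw [Nat.factorial_succ]; push_cast; ring
    rw [hfe, one_div, mul_inv, mul_comm ((m : ℚ) + 3)⁻¹, mul_assoc, inv_mul_cancel₀ hne2,
      mul_one, one_div]
  have hC : (Polynomial.C (1 / (((m + 2) + 1).factorial : ℚ)) : ℚ[X]) * Polynomial.C ((m : ℚ) + 3)
      = Polynomial.C (1 / ((m + 2).factorial : ℚ)) := by
    rw [← Polynomial.C_mul, hfac]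
  rw [← hC, mul_assoc]
  have h3 : Polynomial.C ((m : ℚ) + 3) *
      (Polynomial.derivative^[m + 2] (Polynomial.X ^ (4 + m) * (1 - Polynomial.X) ^ (m + 2) : ℚ[X]))
      = Polynomial.derivative^[m + 2]
        (Polynomial.C ((m : ℚ) + 3) * (Polynomial.X ^ (4 + m) * (1 - Polynomial.X) ^ (m + 2))) :=
    (Polynomial.iterate_derivative_C_mul _ _ _).symm
  have hadd : ∀ p q : ℚ[X], Polynomial.derivative^[m + 2] (p + q)
      = Polynomial.derivative^[m + 2] p + Polynomial.derivative^[m + 2] q := by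
    induction (m + 2) with
    | zero => intro p q; simp
    | succ n ih => intro p q; simp only [Function.iterate_succ_apply, Polynomial.derivative_add, ih]
  rw [h3, ← mul_add, ← hadd]
  congr 2
  rw [show (4 : ℕ) + m = m + 4 from by omega]
  simp only [Polynomial.derivative_mul, Polynomial.derivative_pow, Polynomial.derivative_X,
    Polynomial.derivative_sub, Polynomial.derivative_one, Nat.add_sub_cancel, mul_one]
  simp only [map_sub, map_add, map_mul, map_one, map_ofNat, Polynomial.C_eq_natCast]
  push_cast
  rw [show m + 2 + 1 = m + 3 from rfl, show m + 4 = (m + 2) + 2 from rfl,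
    show m + 3 = (m + 2) + 1 from rfl]
  ring
end

section
/- For every l ≥ 1, the 3-term recurrence (l+4)·f_{A_{l+2}}(t) = (2l+5)·(1-2t)·f_{A_{l+1}}(t) − (l+1)·f_{A_l}(t) holds in ℚ[t], where f_{A_l}(t) = Σ_{k=0}^{l} (-1)^k (1/(l+2))·C(l,k)·C(l+k+2,k+1)·t^k. -/
/-!
`fA l` is the terminating hypergeometric polynomial `₂F₁(-l, l + 3; 2; t)`, that is
`P_l^(1,1)(1 - 2t) / (l + 1)` for the Jacobi polynomial `P_l^(1,1)`, and the statement is the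
three-term recurrence of these polynomials. Its coefficients
`c(l, k) = (-1)^k l(l-1)⋯(l-k+1) (l+3)(l+4)⋯(l+k+2) / (k! (k+1)!)` (`fACoeff`) make sense
for an indeterminate `x` in place of `l` and satisfy two first-order relations, one in `k`
(`fACoeff_succ`) and one in `x` (`fACoeff_add_one`). On the coefficient of `t^(k+1)` these
express all four terms of the recurrence as multiples of `c(x + 1, k)`, and what is left is a
polynomial identity in `x` and `k`.
-/

open Polynomial Finset

open Nat

theorem ascPochhammer_eval_succ_left {R : Type*} [CommSemiring R] (x : R) (k : ℕ) :
    (ascPochhammer R (k + 1)).eval x = x * (ascPochhammer R k).eval (x + 1) := by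
  simp [ascPochhammer_succ_left]

theorem descPochhammer_eval_succ_left {R : Type*} [CommRing R] (x : R) (k : ℕ) :
    (descPochhammer R (k + 1)).eval x = x * (descPochhammer R k).eval (x - 1) := by
  simp [descPochhammer_succ_left]

theorem descPochhammer_succ_eval_add {R : Type*} [CommRing R] (x : R) (k : ℕ) :
    (descPochhammer R (k + 1)).eval (x + k) = x * (ascPochhammer R k).eval (x + 1) := by
  rw [descPochhammer_eval_eq_ascPochhammer, Nat.cast_succ,
    show x + (k : R) - (k + 1) + 1 = x by ring, ascPochhammer_eval_succ_left]

section

variable {K : Type*} [Field K]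

noncomputable def fACoeff (x : K) (k : ℕ) : K :=
  (-1) ^ k * (descPochhammer K k).eval x * (ascPochhammer K k).eval (x + 3) / (k ! * (k + 1)!)

theorem fACoeff_zero (x : K) : fACoeff x 0 = 1 := by
  simp [fACoeff]

theorem fACoeff_add_one (x : K) (k : ℕ) :
    (x + 1 - k) * (x + 3) * fACoeff (x + 1) k = (x + 1) * (x + 3 + k) * fACoeff x k := by
  have hD : (x + 1 - k) * (descPochhammer K k).eval (x + 1)
      = (x + 1) * (descPochhammer K k).eval x := by
    have h := descPochhammer_eval_succ_left (x + 1) k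
    rw [descPochhammer_succ_eval, add_sub_cancel_right] at h
    linear_combination h
  have hA : (x + 3) * (ascPochhammer K k).eval (x + 1 + 3)
      = (x + 3 + k) * (ascPochhammer K k).eval (x + 3) := by
    have h := ascPochhammer_eval_succ_left (x + 3) k
    rw [ascPochhammer_succ_eval, add_right_comm x 3 1] at h
    linear_combination -h
  unfold fACoeff
  linear_combination ((-1) ^ k / (k ! * (k + 1)! : K)) *
    ((x + 3) * (ascPochhammer K k).eval (x + 1 + 3) * hD
      + (x + 1) * (descPochhammer K k).eval x * hA)

variable [CharZero K]

theorem fACoeff_succ (x : K) (k : ℕ) :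
    ((k : K) + 1) * (k + 2) * fACoeff x (k + 1) = -((x - k) * (x + 3 + k)) * fACoeff x k := by
  simp only [fACoeff, descPochhammer_succ_eval, ascPochhammer_succ_eval, factorial_succ]
  have hk₁ : (k : K) + 1 ≠ 0 := Nat.cast_add_one_ne_zero k
  have hk₂ : (k : K) + 1 + 1 ≠ 0 := by exact_mod_cast Nat.succ_ne_zero (k + 1)
  have hf : (k ! : K) ≠ 0 := by exact_mod_cast k.factorial_ne_zero
  push_cast
  field_simp
  ring

theorem fACoeff_recurrence (x : K) (k : ℕ) :
    (x + 4) * fACoeff (x + 2) (k + 1)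
      = (2 * x + 5) * fACoeff (x + 1) (k + 1) - 2 * (2 * x + 5) * fACoeff (x + 1) k
        - (x + 1) * fACoeff x (k + 1) := by
  have R₀ := fACoeff_succ x k
  have R₁ := fACoeff_succ (x + 1) k
  have R₂ := fACoeff_succ (x + 2) k
  have S₀ := fACoeff_add_one x k
  have S₁ := fACoeff_add_one (x + 1) k
  rw [show x + 1 + 1 = x + 2 by ring] at S₁
  have hk : ((k : K) + 1) * (k + 2) ≠ 0 :=
    mul_ne_zero (Nat.cast_add_one_ne_zero k) (by exact_mod_cast Nat.succ_ne_zero (k + 1))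
  refine mul_left_cancel₀ hk ?_
  linear_combination
    (x + 4) * R₂ - (x + 5 + k) * S₁ - (2 * x + 5) * R₁ + (x + 1) * R₀ + (x - k) * S₀

end

theorem coeff_fA (l k : ℕ) : (fA l).coeff k = fACoeff (l : ℚ) k := by
  rw [fA, finsetSum_coeff]
  simp only [coeff_C_mul_X_pow]
  rw [Finset.sum_ite_eq, fACoeff]
  split_ifs with hk
  · rw [Nat.cast_choose_eq_descPochhammer_div, Nat.cast_choose_eq_descPochhammer_div,
      show ((l + k + 2 : ℕ) : ℚ) = (l + 2 : ℚ) + k by push_cast; ring,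
      descPochhammer_succ_eval_add, show (l : ℚ) + 2 + 1 = l + 3 by ring, factorial_succ]
    have : (l : ℚ) + 2 ≠ 0 := by positivity
    push_cast
    field_simp
  · rw [descPochhammer_eval_eq_descFactorial, descFactorial_of_lt (by simpa using hk)]
    simp

theorem recurrence_A_general (l : ℕ) :
    Polynomial.C ((l : ℚ) + 4) * fA (l + 2)
      = Polynomial.C (2 * (l : ℚ) + 5) * (1 - 2 * Polynomial.X) * fA (l + 1)
        - Polynomial.C ((l : ℚ) + 1) * fA l := by
  ext (_ | k) <;>
    simp only [coeff_sub, coeff_C_mul, mul_sub, sub_mul, mul_one, mul_assoc, coeff_ofNat_mul,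
      coeff_X_mul_zero, coeff_X_mul, coeff_fA] <;>
    push_cast
  · simp only [fACoeff_zero]
    ring
  · linear_combination fACoeff_recurrence (l : ℚ) k

theorem recurrence_A (l : ℕ) (hl : 1 ≤ l) :
    Polynomial.C ((l : ℚ) + 4) * fA (l + 2)
      = Polynomial.C (2 * (l : ℚ) + 5) * (1 - 2 * Polynomial.X) * fA (l + 1)
        - Polynomial.C ((l : ℚ) + 1) * fA l :=
  recurrence_A_general l
end

section
/- For every l ≥ 1, the 3-term recurrence (l+2)·f_{B_{l+2}}(t) = (2l+3)·(1-2t)·f_{B_{l+1}}(t) − (l+1)·f_{B_l}(t) holds in ℚ[t], where f_{B_l}(t) = Σ_{k=0}^{l} (-1)^k C(l,k)·C(l+k,k)·t^k. -/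
open Polynomial Finset

lemma coeff_fB (l n : ℕ) :
    (fB l).coeff n = (-1 : ℚ)^n * (l.choose n) * ((l+n).choose n) := by
  unfold fB
  rw [finset_sum_coeff]
  simp only [coeff_C_mul, coeff_X_pow, mul_ite, mul_one, mul_zero]
  rcases lt_or_ge n (l+1) with h | h
  · rw [Finset.sum_ite_eq (Finset.range (l+1)) n]
    simp [Finset.mem_range.mpr h]
  · rw [Finset.sum_ite_eq (Finset.range (l+1)) n]
    have : l.choose n = 0 := Nat.choose_eq_zero_of_lt (by omega)
    simp [Finset.mem_range, this]


lemma fact_ne (j : ℕ) : ((j.factorial : ℚ)) ≠ 0 := by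
  exact_mod_cast j.factorial_pos.ne'

lemma cast_b (l k : ℕ) (h : k ≤ l) :
    ((l.choose k : ℚ)) * ((l + k).choose k) =
      ((l + k).factorial : ℚ) / ((k.factorial : ℚ)^2 * ((l - k).factorial : ℚ)) := by
  rw [Nat.cast_choose ℚ h, Nat.cast_choose ℚ (Nat.le_add_left k l)]
  have e : l + k - k = l := by omega
  rw [e]
  field_simp [fact_ne]

lemma key_s9 (l n : ℕ) :
    ((l:ℚ)+2) * ((((l+2).choose (n+1)) : ℚ) * (((l+2+(n+1)).choose (n+1)) : ℚ))
      + ((l:ℚ)+1) * (((l.choose (n+1)) : ℚ) * (((l+(n+1)).choose (n+1)) : ℚ))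
    = (2*(l:ℚ)+3) * ((((l+1).choose (n+1)) : ℚ) * (((l+1+(n+1)).choose (n+1)) : ℚ))
      + 2*(2*(l:ℚ)+3) * ((((l+1).choose n) : ℚ) * (((l+1+n).choose n) : ℚ)) := by
  by_cases h1 : n + 1 ≤ l
  · obtain ⟨m, rfl⟩ : ∃ m, l = n + 1 + m := ⟨l - (n+1), by omega⟩
    rw [cast_b (n+1+m+2) (n+1) (by omega), cast_b (n+1+m) (n+1) (by omega),
        cast_b (n+1+m+1) (n+1) (by omega), cast_b (n+1+m+1) n (by omega)]
    rw [show n+1+m+2+(n+1) = 2*n+m+4 from by omega,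
        show n+1+m+(n+1) = 2*n+m+2 from by omega,
        show n+1+m+1+(n+1) = 2*n+m+3 from by omega,
        show n+1+m+1+n = 2*n+m+2 from by omega,
        show n+1+m+2-(n+1) = m+2 from by omega,
        show n+1+m-(n+1) = m from by omega,
        show n+1+m+1-(n+1) = m+1 from by omega,
        show n+1+m+1-n = m+2 from by omega]
    have ha : (((2*n+m+4).factorial : ℚ)) = ((2*n+m+4 : ℕ) : ℚ)*((2*n+m+3 : ℕ) : ℚ)*(((2*n+m+2).factorial : ℚ)) := by
      rw [show 2*n+m+4 = (2*n+m+3)+1 from by omega, Nat.factorial_succ,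
          show 2*n+m+3 = (2*n+m+2)+1 from by omega, Nat.factorial_succ]
      push_cast; ring
    have hb : (((2*n+m+3).factorial : ℚ)) = ((2*n+m+3 : ℕ) : ℚ)*(((2*n+m+2).factorial : ℚ)) := by
      rw [show 2*n+m+3 = (2*n+m+2)+1 from by omega, Nat.factorial_succ]; push_cast; ring
    have hc : (((m+2).factorial : ℚ)) = ((m+2 : ℕ) : ℚ)*((m+1 : ℕ) : ℚ)*((m.factorial : ℚ)) := by
      rw [Nat.factorial_succ, Nat.factorial_succ]; push_cast; ring
    have hd : (((m+1).factorial : ℚ)) = ((m+1 : ℕ) : ℚ)*((m.factorial : ℚ)) := by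
      rw [Nat.factorial_succ]; push_cast; ring
    have he : (((n+1).factorial : ℚ)) = ((n+1 : ℕ) : ℚ)*((n.factorial : ℚ)) := by
      rw [Nat.factorial_succ]; push_cast; ring
    rw [ha, hb, hc, hd, he]
    field_simp [fact_ne]
    push_cast
    ring
  · by_cases h2 : l = n
    · subst h2
      rw [show l.choose (l+1) = 0 from Nat.choose_eq_zero_of_lt (by omega)]
      rw [cast_b (l+2) (l+1) (by omega), cast_b (l+1) (l+1) (by omega),
          cast_b (l+1) l (by omega)]
      rw [show l+2+(l+1) = 2*l+3 from by omega,
          show l+1+(l+1) = 2*l+2 from by omega,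
          show l+1+l = 2*l+1 from by omega,
          show l+2-(l+1) = 1 from by omega,
          show l+1-(l+1) = 0 from by omega,
          show l+1-l = 1 from by omega]
      have ha : (((2*l+3).factorial : ℚ)) = ((2*l+3 : ℕ) : ℚ)*((2*l+2 : ℕ) : ℚ)*(((2*l+1).factorial : ℚ)) := by
        rw [show 2*l+3 = (2*l+2)+1 from by omega, Nat.factorial_succ,
            show 2*l+2 = (2*l+1)+1 from by omega, Nat.factorial_succ]
        push_cast; ring
      have hb : (((2*l+2).factorial : ℚ)) = ((2*l+2 : ℕ) : ℚ)*(((2*l+1).factorial : ℚ)) := by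
        rw [show 2*l+2 = (2*l+1)+1 from by omega, Nat.factorial_succ]; push_cast; ring
      have he : (((l+1).factorial : ℚ)) = ((l+1 : ℕ) : ℚ)*((l.factorial : ℚ)) := by
        rw [Nat.factorial_succ]; push_cast; ring
      rw [ha, hb, he]
      simp only [Nat.factorial_one, Nat.factorial_zero]
      field_simp [fact_ne]
      push_cast
      ring
    · by_cases h3 : l + 1 = n
      · subst h3
        rw [show l.choose (l+1+1) = 0 from Nat.choose_eq_zero_of_lt (by omega),
            show (l+1).choose (l+1+1) = 0 from Nat.choose_eq_zero_of_lt (by omega)]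
        rw [cast_b (l+2) (l+2) (by omega), cast_b (l+1) (l+1) (by omega)]
        rw [show l+2+(l+1+1) = 2*l+4 from by omega,
            show l+1+(l+1) = 2*l+2 from by omega,
            show l+2-(l+2) = 0 from by omega,
            show l+1-(l+1) = 0 from by omega]
        have ha : (((2*l+4).factorial : ℚ)) = ((2*l+4 : ℕ) : ℚ)*((2*l+3 : ℕ) : ℚ)*(((2*l+2).factorial : ℚ)) := by
          rw [show 2*l+4 = (2*l+3)+1 from by omega, Nat.factorial_succ,
              show 2*l+3 = (2*l+2)+1 from by omega, Nat.factorial_succ]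
          push_cast; ring
        have he : (((l+2).factorial : ℚ)) = ((l+2 : ℕ) : ℚ)*(((l+1).factorial : ℚ)) := by
          rw [show l+2 = (l+1)+1 from by omega, Nat.factorial_succ]; push_cast; ring
        rw [ha, he]
        simp only [Nat.factorial_zero]
        field_simp [fact_ne]
        push_cast
        ring
      · rw [show l.choose (n+1) = 0 from Nat.choose_eq_zero_of_lt (by omega),
            show (l+1).choose (n+1) = 0 from Nat.choose_eq_zero_of_lt (by omega),
            show (l+2).choose (n+1) = 0 from Nat.choose_eq_zero_of_lt (by omega),
            show (l+1).choose n = 0 from Nat.choose_eq_zero_of_lt (by omega)]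
        push_cast
        ring

theorem recurrence_B (l : ℕ) (hl : 1 ≤ l) :
    Polynomial.C ((l : ℚ) + 2) * fB (l + 2)
      = Polynomial.C (2 * (l : ℚ) + 3) * (1 - 2 * Polynomial.X) * fB (l + 1)
        - Polynomial.C ((l : ℚ) + 1) * fB l := by
  ext n
  have expand : Polynomial.C (2 * (l : ℚ) + 3) * (1 - 2 * Polynomial.X) * fB (l + 1)
      = Polynomial.C (2 * (l : ℚ) + 3) * fB (l + 1)
        - Polynomial.C (2 * (2 * (l : ℚ) + 3)) * (Polynomial.X * fB (l + 1)) := by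
    simp only [map_mul]
    ring_nf
    simp [map_ofNat]
  rw [expand]
  simp only [coeff_sub, coeff_C_mul]
  rcases n with _ | n
  · simp [coeff_fB]
    ring
  · rw [Polynomial.coeff_X_mul]
    simp only [coeff_fB]
    have h := key_s9 l n
    push_cast at h ⊢
    linear_combination ((-1 : ℚ)^(n+1)) * h
end

section
/- For every l ≥ 4, f_{D_l}(t) = (-1)^l · f_{D_l}(1-t) as polynomials in ℚ[t], where f_{D_l}(t) = Σ_{k=0}^{l} (-1)^k (C(l,k)·C(l+k-1,k) + C(l-2,k-2)·C(l+k-2,k))·t^k. -/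
open Polynomial Finset

/-!
Let `P n = ∑ (-1)ᵏ C(n,k) C(n+k,k) tᵏ` be the shifted Legendre polynomial; it satisfies
`P n (1 - t) = (-1)ⁿ P n t`. Coefficientwise, `(4l - 2) f_{D_l} = l P (l - 2) + (3l - 2) P l`:
for `k = j + 2` every binomial product occurring in the `k`-th coefficients is a rational function
of `l` and `j` times `C(l - 2, j) C(l + j, j + 2)`, which turns the comparison into a polynomial
identity. Both Legendre polynomials on the right have the parity of `l`, hence so does `f_{D_l}`.
-/

theorem Nat.cast_choose_succ_right_eq {R : Type*} [CommRing R] (n k : ℕ) :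
    (n.choose (k + 1) : R) * (k + 1) = n.choose k * (n - k) := by
  rcases le_or_gt k n with hkn | hnk
  · have h := congrArg (Nat.cast : ℕ → R) (Nat.choose_succ_right_eq n k)
    push_cast [hkn] at h
    exact h
  · simp [Nat.choose_eq_zero_of_lt hnk, Nat.choose_eq_zero_of_lt (hnk.trans k.lt_succ_self)]

section CastChoose

variable {K : Type*} [Field K] [CharZero K]

theorem Nat.cast_choose_add_two_add_two (n k : ℕ) :
    ((n + 2).choose (k + 2) : K) = (n + 1) * (n + 2) / ((k + 1) * (k + 2)) * n.choose k := by
  have h₁ : ((n + 2 : ℕ) : K) * (n + 1).choose (k + 1) = (n + 2).choose (k + 2) * (k + 2 : ℕ) :=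
    mod_cast Nat.add_one_mul_choose_eq (n + 1) (k + 1)
  have h₂ : ((n + 1 : ℕ) : K) * n.choose k = (n + 1).choose (k + 1) * (k + 1 : ℕ) :=
    mod_cast Nat.add_one_mul_choose_eq n k
  rw [div_mul_eq_mul_div, eq_div_iff (mod_cast (by positivity : (k + 1) * (k + 2) ≠ 0))]
  push_cast at h₁ h₂
  linear_combination (-(k : K) - 1) * h₁ - (n + 2) * h₂

theorem Nat.cast_choose_add_two (n k : ℕ) :
    (n.choose (k + 2) : K) = (n - k) * (n - k - 1) / ((k + 1) * (k + 2)) * n.choose k := by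
  have h₁ := Nat.cast_choose_succ_right_eq (R := K) n (k + 1)
  have h₂ := Nat.cast_choose_succ_right_eq (R := K) n k
  rw [div_mul_eq_mul_div, eq_div_iff (mod_cast (by positivity : (k + 1) * (k + 2) ≠ 0))]
  push_cast at h₁ h₂
  linear_combination (k + 1 : K) * h₁ + (n - k - 1 : K) * h₂

theorem Nat.cast_choose_add_succ_left (n k : ℕ) :
    ((n + k + 1).choose k : K) = (n + k + 1) / (n + 1) * (n + k).choose k := by
  have h : ((n + k).choose k : K) * (n + k + 1 : ℕ) = (n + k + 1).choose k * (n + 1 : ℕ) := by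
    have h' := Nat.choose_mul_succ_eq (n + k) k
    rw [show n + k + 1 - k = n + 1 by omega] at h'
    exact_mod_cast h'
  rw [div_mul_eq_mul_div, eq_div_iff (Nat.cast_add_one_ne_zero n)]
  push_cast at h
  linear_combination -h

end CastChoose

theorem shiftedLegendre_map_comp_one_sub_X {R : Type*} [CommRing R] (n : ℕ) :
    ((shiftedLegendre n).map (Int.castRingHom R)).comp (1 - X)
      = (-1) ^ n * (shiftedLegendre n).map (Int.castRingHom R) := by
  have h := congrArg (map (Int.castRingHom R)) (neg_one_pow_mul_shiftedLegendre_comp_one_sub_X_eq n)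
  rw [Polynomial.map_mul, Polynomial.map_pow, Polynomial.map_neg, Polynomial.map_one, map_comp,
    Polynomial.map_sub, Polynomial.map_one, map_X] at h
  conv_rhs => rw [← h]
  rw [← mul_assoc, ← mul_pow, neg_one_mul, neg_neg, one_pow, one_mul]

theorem coeff_fD {l : ℕ} (hl : 2 ≤ l) (k : ℕ) :
    (fD l).coeff k = (-1) ^ k * ((l.choose k * (l + k - 1).choose k
        + if 2 ≤ k then (l - 2).choose (k - 2) * (l + k - 2).choose k else 0 : ℕ) : ℚ) := by
  rw [fD, finsetSum_coeff]
  simp only [coeff_C_mul_X_pow, Finset.sum_ite_eq, Finset.mem_range, ite_eq_left_iff, not_lt]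
  intro hk
  simp [Nat.choose_eq_zero_of_lt (by omega : l < k),
    Nat.choose_eq_zero_of_lt (by omega : l - 2 < k - 2)]

theorem fD_coeff_combination (m k : ℕ) :
    (4 * (m : ℚ) + 6) * (((m + 2).choose k * (m + k + 1).choose k
        + if 2 ≤ k then m.choose (k - 2) * (m + k).choose k else 0 : ℕ) : ℚ)
      = (m + 2) * (m.choose k * (m + k).choose k)
        + (3 * m + 4) * ((m + 2).choose k * (m + k + 2).choose k) := by
  rcases lt_or_ge k 2 with hk | hk
  · interval_cases k <;> simp <;> ring
  obtain ⟨j, rfl⟩ := Nat.exists_eq_add_of_le' hk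
  rw [if_pos (by omega), Nat.add_sub_cancel, Nat.cast_add, Nat.cast_mul, Nat.cast_mul,
    show m + (j + 2) + 2 = m + 1 + (j + 2) + 1 by ring, Nat.cast_choose_add_succ_left (m + 1),
    show m + 1 + (j + 2) = m + (j + 2) + 1 by ring, Nat.cast_choose_add_succ_left m,
    Nat.cast_choose_add_two_add_two m j, Nat.cast_choose_add_two m j]
  push_cast
  field_simp
  ring

theorem C_mul_fD_eq (m : ℕ) :
    C (4 * m + 6 : ℚ) * fD (m + 2)
      = C (m + 2 : ℚ) * (shiftedLegendre m).map (Int.castRingHom ℚ)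
        + C (3 * m + 4 : ℚ) * (shiftedLegendre (m + 2)).map (Int.castRingHom ℚ) := by
  ext k
  rw [coeff_add, coeff_C_mul, coeff_C_mul, coeff_C_mul, coeff_fD (by omega), coeff_map, coeff_map,
    coeff_shiftedLegendre, coeff_shiftedLegendre, Nat.choose_symm_add, Nat.choose_symm_add,
    show m + 2 + k - 1 = m + k + 1 by omega, show m + 2 + k = m + k + 2 by omega]
  simp only [Nat.add_sub_cancel, eq_intCast, Int.cast_mul, Int.cast_pow, Int.cast_neg,
    Int.cast_one, Int.cast_natCast]
  linear_combination (-1 : ℚ) ^ k * fD_coeff_combination m k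

theorem fD_symmetry (l : ℕ) (hl : 4 ≤ l) :
    fD l = Polynomial.C ((-1 : ℚ) ^ l) * (fD l).comp (1 - Polynomial.X) := by
  obtain ⟨m, rfl⟩ : ∃ m, l = m + 2 := ⟨l - 2, by omega⟩
  have hsymm : (C (4 * m + 6 : ℚ) * fD (m + 2)).comp (1 - X)
      = (-1) ^ m * (C (4 * m + 6 : ℚ) * fD (m + 2)) := by
    rw [C_mul_fD_eq, add_comp, mul_comp, mul_comp, C_comp, C_comp,
      shiftedLegendre_map_comp_one_sub_X, shiftedLegendre_map_comp_one_sub_X]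
    ring
  rw [mul_comp, C_comp] at hsymm
  have hc : C (4 * m + 6 : ℚ) ≠ 0 := C_ne_zero.2 (by positivity)
  apply mul_left_cancel₀ hc
  rw [mul_left_comm, hsymm, map_pow, map_neg, map_one, ← mul_assoc, ← pow_add,
    show m + 2 + m = 2 * (m + 1) by ring, pow_mul, neg_one_sq, one_pow, one_mul]
end

section
/- For every l ≥ 2, the polynomial f_{B_l}(t) = Σ_{k=0}^{l} (-1)^k C(l,k)·C(l+k,k)·t^k is divisible by 2t−1 in ℚ[t] if and only if l is odd. -/
open Polynomial Finset

namespace Polynomial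

theorem shiftedLegendre_eq_hasseDeriv (n : ℕ) :
    shiftedLegendre n = hasseDeriv n (X ^ n * (1 - X) ^ n) := by
  refine nat_mul_inj' ?_ (Nat.factorial_ne_zero n)
  rw [factorial_mul_shiftedLegendre_eq, ← factorial_smul_hasseDeriv, LinearMap.smul_apply,
    nsmul_eq_mul]

theorem hasseDeriv_map {R S : Type*} [Semiring R] [Semiring S] (f : R →+* S) (k : ℕ)
    (p : R[X]) :
    hasseDeriv k (p.map f) = (hasseDeriv k p).map f := by
  ext n
  simp [hasseDeriv_coeff]

theorem aeval_shiftedLegendre {R : Type*} [CommRing R] (n : ℕ) (r : R) :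
    aeval r (shiftedLegendre n) = (taylor r (X ^ n * (1 - X) ^ n)).coeff n := by
  rw [taylor_coeff, shiftedLegendre_eq_hasseDeriv, aeval_def, eval₂_eq_eval_map,
    ← hasseDeriv_map]
  simp

theorem taylor_half_X_pow_mul_one_sub_X_pow {K : Type*} [Field K] [NeZero (2 : K)] (n : ℕ) :
    taylor (2⁻¹ : K) (X ^ n * (1 - X) ^ n) = expand K 2 ((C 4⁻¹ - X) ^ n) := by
  have h4 : (4⁻¹ : K) = 2⁻¹ * 2⁻¹ := by rw [← mul_inv]; norm_num
  have h1 : (1 : K[X]) = C 2⁻¹ + C 2⁻¹ := by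
    rw [← C_add, ← two_mul, mul_inv_cancel₀ two_ne_zero, C_1]
  rw [taylor_apply, mul_comp, pow_comp, pow_comp, X_comp, sub_comp, one_comp, X_comp, ← mul_pow,
    map_pow, map_sub, expand_C, expand_X, h4, C_mul, h1]
  ring

theorem aeval_half_shiftedLegendre {K : Type*} [Field K] [NeZero (2 : K)] (n : ℕ) :
    aeval (2⁻¹ : K) (shiftedLegendre n) =
      if Even n then (-4⁻¹ : K) ^ (n / 2) * n.choose (n / 2) else 0 := by
  rw [aeval_shiftedLegendre, taylor_half_X_pow_mul_one_sub_X_pow, coeff_expand two_pos]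
  by_cases h : Even n
  · rw [if_pos h.two_dvd, if_pos h]
    obtain ⟨m, rfl⟩ := h
    have hm : (m + m) / 2 = m := by omega
    rw [hm, ← Even.neg_pow ⟨m, rfl⟩, neg_sub, sub_eq_add_neg, ← C_neg,
      coeff_X_add_C_pow, Nat.add_sub_cancel]
  · rw [if_neg (mt even_iff_two_dvd.mpr h), if_neg h]

theorem aeval_half_shiftedLegendre_eq_zero_iff {K : Type*} [Field K] [CharZero K] (n : ℕ) :
    aeval (2⁻¹ : K) (shiftedLegendre n) = 0 ↔ Odd n := by
  rw [aeval_half_shiftedLegendre, ← Nat.not_even_iff_odd]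
  split_ifs with h <;> simp [h, (Nat.choose_pos (Nat.div_le_self n 2)).ne']

theorem two_mul_X_sub_one_dvd_iff {K : Type*} [Field K] [NeZero (2 : K)] (p : K[X]) :
    2 * X - 1 ∣ p ↔ p.eval 2⁻¹ = 0 := by
  have h : (2 * X - 1 : K[X]) = C 2 * (X - C 2⁻¹) := by
    rw [mul_sub, ← C_mul, mul_inv_cancel₀ two_ne_zero, C_1, C_ofNat]
  rw [h, (isUnit_C.mpr (isUnit_iff_ne_zero.mpr two_ne_zero)).mul_left_dvd, dvd_iff_isRoot,
    IsRoot.def]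

end Polynomial

theorem fB_eq_map_shiftedLegendre (l : ℕ) :
    fB l = (shiftedLegendre l).map (algebraMap ℤ ℚ) := by
  simp [fB, shiftedLegendre, Polynomial.map_sum, ← Nat.choose_symm_add]

theorem fB_divisible_iff_odd_general (l : ℕ) :
    (2 * Polynomial.X - 1) ∣ fB l ↔ Odd l := by
  rw [two_mul_X_sub_one_dvd_iff, fB_eq_map_shiftedLegendre, eval_map_algebraMap,
    aeval_half_shiftedLegendre_eq_zero_iff]

theorem fB_divisible_iff_odd (l : ℕ) (hl : 2 ≤ l) :
    (2 * Polynomial.X - 1) ∣ fB l ↔ Odd l :=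
  fB_divisible_iff_odd_general l
end

section
/- The polynomial f_{E_8}(t) = 1 − 128t + 2408t² − 17936t³ + 67488t⁴ − 140448t⁵ + 163856t⁶ − 100320t⁷ + 25080t⁸ has exactly 8 distinct real roots, all lying in the open interval (0,1). -/
noncomputable def fE8 (t : ℝ) : ℝ :=
  1 - 128 * t + 2408 * t ^ 2 - 17936 * t ^ 3 + 67488 * t ^ 4 - 140448 * t ^ 5
    + 163856 * t ^ 6 - 100320 * t ^ 7 + 25080 * t ^ 8

/-!
A real polynomial of degree at most `n` that changes sign `n` times along an increasing
sequence of points has, by the intermediate value theorem, a root strictly between any two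
consecutive points; these `n` distinct roots are then all of its roots.
-/

open Polynomial Set

theorem exists_zero_mem_Ioo_of_mul_neg {f : ℝ → ℝ} (hf : Continuous f) {a b : ℝ} (hab : a ≤ b)
    (h : f a * f b < 0) : ∃ x ∈ Ioo a b, f x = 0 := by
  rcases mul_neg_iff.mp h with ⟨ha, hb⟩ | ⟨ha, hb⟩
  · exact intermediate_value_Ioo' hab hf.continuousOn ⟨hb, ha⟩
  · exact intermediate_value_Ioo hab hf.continuousOn ⟨ha, hb⟩

section SignChanges

variable {n : ℕ} {a : Fin (n + 1) → ℝ}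

theorem exists_strictMono_zeros_of_alternating {f : ℝ → ℝ} (hf : Continuous f)
    (ha : StrictMono a) (hsign : ∀ i : Fin n, f (a i.castSucc) * f (a i.succ) < 0) :
    ∃ r : Fin n → ℝ, StrictMono r ∧ (∀ i, f (r i) = 0) ∧
      ∀ i, r i ∈ Ioo (a i.castSucc) (a i.succ) := by
  choose r hr hzero using fun i =>
    exists_zero_mem_Ioo_of_mul_neg hf (ha.monotone (Fin.castSucc_le_succ i)) (hsign i)
  refine ⟨r, fun i j hij => ?_, hzero, hr⟩
  calc r i < a i.succ := (hr i).2
    _ ≤ a j.castSucc := ha.monotone (Fin.succ_le_castSucc_iff.mpr hij)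
    _ < r j := (hr j).1

theorem Polynomial.exists_roots_of_alternating {p : ℝ[X]} (hp : p.natDegree ≤ n) (hn : 0 < n)
    (ha : StrictMono a) (hsign : ∀ i : Fin n, p.eval (a i.castSucc) * p.eval (a i.succ) < 0) :
    ∃ S : Finset ℝ, S.card = n ∧ (∀ x, p.eval x = 0 ↔ x ∈ S) ∧
      ∀ x ∈ S, a 0 < x ∧ x < a (Fin.last n) := by
  have hp0 : p ≠ 0 := by
    intro h
    simpa [h] using hsign ⟨0, hn⟩
  obtain ⟨r, hr, hroot, hIoo⟩ := exists_strictMono_zeros_of_alternating p.continuous ha hsign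
  have himage : Finset.univ.image r ⊆ p.roots.toFinset := by
    simp [Finset.subset_iff, hp0, hroot]
  have hcard : (Finset.univ.image r).card = n := by
    simp [Finset.card_image_of_injective _ hr.injective]
  have hcard_roots : p.roots.toFinset.card ≤ n :=
    (Multiset.toFinset_card_le _).trans (p.card_roots'.trans hp)
  have hroots : Finset.univ.image r = p.roots.toFinset :=
    Finset.eq_of_subset_of_card_le himage (hcard_roots.trans hcard.ge)
  refine ⟨Finset.univ.image r, hcard, fun x => by simp [hroots, hp0], ?_⟩
  simp only [Finset.mem_image, Finset.mem_univ, true_and, forall_exists_index,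
    forall_apply_eq_imp_iff]
  intro i
  exact ⟨(ha.monotone (Fin.zero_le _)).trans_lt (hIoo i).1,
    (hIoo i).2.trans_le (ha.monotone (Fin.le_last _))⟩

end SignChanges

noncomputable def fE8Poly : ℝ[X] :=
  1 - 128 * X + 2408 * X ^ 2 - 17936 * X ^ 3 + 67488 * X ^ 4 - 140448 * X ^ 5
    + 163856 * X ^ 6 - 100320 * X ^ 7 + 25080 * X ^ 8

theorem eval_fE8Poly (x : ℝ) : fE8Poly.eval x = fE8 x := by
  simp [fE8Poly, fE8]

theorem natDegree_fE8Poly : fE8Poly.natDegree ≤ 8 := by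
  unfold fE8Poly
  compute_degree

noncomputable def fE8SignPoints : Fin 9 → ℝ := ![0, 1/64, 7/64, 1/4, 1/2, 3/4, 57/64, 63/64, 1]

theorem strictMono_fE8SignPoints : StrictMono fE8SignPoints := by
  refine Fin.strictMono_iff_lt_succ.mpr fun i => ?_
  fin_cases i <;> norm_num [fE8SignPoints, Fin.succ, Fin.castSucc, Fin.castAdd, Fin.castLE]

theorem fE8Poly_alternates (i : Fin 8) :
    fE8Poly.eval (fE8SignPoints i.castSucc) * fE8Poly.eval (fE8SignPoints i.succ) < 0 := by
  fin_cases i <;>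
    norm_num [fE8SignPoints, Fin.succ, Fin.castSucc, Fin.castAdd, Fin.castLE, eval_fE8Poly, fE8]

theorem fE8_roots : ∃ S : Finset ℝ, S.card = 8 ∧ (∀ x : ℝ, fE8 x = 0 ↔ x ∈ S) ∧
    ∀ x ∈ S, 0 < x ∧ x < 1 := by
  obtain ⟨S, hcard, hroots, hbounds⟩ := exists_roots_of_alternating natDegree_fE8Poly
    (by norm_num) strictMono_fE8SignPoints fE8Poly_alternates
  exact ⟨S, hcard, fun x => by rw [← eval_fE8Poly, hroots],
    by simpa [fE8SignPoints] using hbounds⟩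
end

section
/- Let h_k(t) = (t(t-1))^k for k ≥ 0. Then for all 1 ≤ i ≤ k, the (2i−1)-th formal derivative of h_k vanishes at t = 1/2, and the (2i)-th formal derivative of h_k at t = 1/2 equals (−1/4)^{k−i} · k!·(2i)!/((k−i)!·i!). -/
open Polynomial

private lemma iter_deriv_comp_shift (a : ℚ) (p : Polynomial ℚ) (n : ℕ) :
    Polynomial.derivative^[n] (p.comp (X + C a)) =
      (Polynomial.derivative^[n] p).comp (X + C a) := by
  induction n generalizing p with
  | zero => simp
  | succ n ih =>
    rw [Function.iterate_succ_apply, Polynomial.derivative_comp]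
    simp only [derivative_add, derivative_X, derivative_C, add_zero, one_mul]
    rw [ih, Function.iterate_succ_apply]

private lemma eval_iter_deriv (k n : ℕ) :
    (Polynomial.derivative^[n] ((X * (X - 1)) ^ k : Polynomial ℚ)).eval (1 / 2)
      = ∑ m ∈ Finset.range (k + 1),
          (-(1/4) : ℚ) ^ (k - m) * (k.choose m : ℚ) *
            (if 2 * m = n then (n.factorial : ℚ) else 0) := by
  have hcomp : ((X * (X - 1)) ^ k : Polynomial ℚ).comp (X + C (1/2))
      = (X ^ 2 + C (-(1/4) : ℚ)) ^ k := by
    apply Polynomial.funext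
    intro x
    simp [eval_comp]
    ring
  have key : (Polynomial.derivative^[n] ((X * (X - 1)) ^ k : Polynomial ℚ)).eval (1 / 2)
      = (Polynomial.derivative^[n] (((X * (X - 1)) ^ k : Polynomial ℚ).comp (X + C (1/2)))).eval 0 := by
    rw [iter_deriv_comp_shift, Polynomial.eval_comp]
    norm_num
  rw [key, hcomp, add_pow]
  rw [Polynomial.iterate_derivative_sum, Polynomial.eval_finset_sum]
  apply Finset.sum_congr rfl
  intro m hm
  have hterm : ((X:Polynomial ℚ) ^ 2) ^ m * (C (-(1/4) : ℚ)) ^ (k - m) * (k.choose m : Polynomial ℚ)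
      = C ((-(1/4) : ℚ) ^ (k - m) * (k.choose m : ℚ)) * X ^ (2 * m) := by
    rw [← pow_mul, ← C_pow, C_mul, C_eq_natCast]; ring
  rw [hterm, Polynomial.iterate_derivative_C_mul, Polynomial.eval_mul, Polynomial.eval_C,
    Polynomial.iterate_derivative_X_pow_eq_C_mul, Polynomial.eval_mul, Polynomial.eval_C]
  have hmem := Finset.mem_range.mp hm
  rcases lt_trichotomy (2 * m) n with h | h | h
  · rw [if_neg h.ne, Nat.descFactorial_eq_zero_iff_lt.mpr h]
    simp
  · rw [if_pos h, h, Nat.sub_self, pow_zero, eval_one, Nat.descFactorial_self]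
    ring
  · rw [if_neg h.ne', eval_pow, eval_X, zero_pow (by omega), mul_zero, mul_zero]

theorem formula_B (k i : ℕ) (hi : 1 ≤ i) (hik : i ≤ k) :
    (Polynomial.derivative^[2 * i - 1]
        ((Polynomial.X * (Polynomial.X - 1)) ^ k : Polynomial ℚ)).eval (1 / 2) = 0 ∧
    (Polynomial.derivative^[2 * i]
        ((Polynomial.X * (Polynomial.X - 1)) ^ k : Polynomial ℚ)).eval (1 / 2)
      = (-(1 / 4) : ℚ) ^ (k - i) *
        ((k.factorial : ℚ) * ((2 * i).factorial : ℚ)) /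
        (((k - i).factorial : ℚ) * (i.factorial : ℚ)) := by
  constructor
  · rw [eval_iter_deriv]
    apply Finset.sum_eq_zero
    intro m _
    rw [if_neg (by omega), mul_zero]
  · rw [eval_iter_deriv]
    rw [Finset.sum_eq_single i]
    · rw [if_pos rfl]
      have hc : (k.choose i : ℚ) * ((k - i).factorial * i.factorial) = k.factorial := by
        exact_mod_cast congrArg (Nat.cast : ℕ → ℚ)
          (by rw [← Nat.choose_mul_factorial_mul_factorial hik]; ring)
      rw [eq_div_iff (by positivity : (((k - i).factorial : ℚ) * (i.factorial : ℚ)) ≠ 0),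
        ← hc]
      ring
    · intro m _ hm
      rw [if_neg (by omega), mul_zero]
    · intro h
      exact absurd (Finset.mem_range.mpr (by omega)) h
end
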